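/- arXiv:2207.13746 — 3 statements merged into one kernel-verified Lean document; each statement's English description precedes it below -/
import Mathlib

section
/- Let F be a symmetric positive-definite 2×2 real matrix with det F = 1. Then there exist R ∈ SO(2) and vectors a, b ∈ ℝ² such that F = R + a ⊗ b, where a ⊗ b denotes the rank-one matrix with entries (a ⊗ b)_{ij} = a_i b_j. -/
open MeasureTheory Metric Set Matrix

noncomputable section

abbrev Mat2 := Matrix (Fin 2) (Fin 2) ℝ
abbrev E2 := EuclideanSpace ℝ (Fin 2)

/-- Frobenius norm of a 2×2 real matrix. -/
noncomputable def frobNorm (A : Mat2) : ℝ := Real.sqrt ((Aᵀ * A).trace)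

/-- Distance (in Frobenius norm) from a matrix to a set of matrices. -/
noncomputable def mdist (A : Mat2) (K : Set Mat2) : ℝ :=
  sInf ((fun B => frobNorm (A - B)) '' K)

/-- The rotation group SO(2). -/
def SO2 : Set Mat2 := {Q | Qᵀ * Q = 1 ∧ Q.det = 1}

/-- The set SO(2)·G = {Q*G : Q ∈ SO(2)}. -/
def SO2mul (G : Mat2) : Set Mat2 := (fun Q => Q * G) '' SO2

/-- Gradient of v : ℝ² → ℝ² as a 2×2 matrix (defined a.e. via fderiv). -/
noncomputable def grad (v : E2 → E2) (x : E2) : Mat2 :=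
  fun i j => fderiv ℝ v x (EuclideanSpace.single j 1) i

/-- `v` is bi-Lipschitz with constant `m`: a homeomorphism (bijective with
Lipschitz inverse) such that `v` and `v⁻¹` are Lipschitz with constant `m`. -/
def IsBiLipschitzWith (m : ℝ) (v : E2 → E2) : Prop :=
  Function.Bijective v ∧ LipschitzWith m.toNNReal v ∧
    LipschitzWith m.toNNReal (Function.invFun v)

set_option linter.unnecessarySeqFocus false in
lemma det0_rank_one' (M : Mat2) (h : M.det = 0) :
    ∃ a b : Fin 2 → ℝ, M = Matrix.vecMulVec a b := by
  rw [Matrix.det_fin_two] at h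
  by_cases h0 : M 0 0 = 0
  · rcases mul_eq_zero.mp (by rw [h0, zero_mul, zero_sub, neg_eq_zero] at h; exact h) with h1 | h1
    · exact ⟨![0, 1], ![M 1 0, M 1 1], by
        ext i j; fin_cases i <;> fin_cases j <;> simp [vecMulVec_apply, h0, h1]⟩
    · exact ⟨![M 0 1, M 1 1], ![0, 1], by
        ext i j; fin_cases i <;> fin_cases j <;> simp [vecMulVec_apply, h0, h1]⟩
  · refine ⟨![M 0 0, M 1 0], ![1, M 0 1 / M 0 0], ?_⟩
    ext i j; fin_cases i <;> fin_cases j <;>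
      simp [vecMulVec_apply] <;> field_simp <;> nlinarith [h]

/-- rank-one decomposition `F = R + a ⊗ b` of a symmetric
positive-definite matrix with determinant one. -/
theorem rank_one_decomposition (F : Mat2) (hF : F.PosDef) (hdet : F.det = 1) :
    ∃ R ∈ SO2, ∃ a b : Fin 2 → ℝ, F = R + Matrix.vecMulVec a b := by
  have hsym : F 1 0 = F 0 1 := by
    have := hF.1.apply 0 1; simpa using this
  have ha : 0 < F 0 0 := by
    have := hF.dotProduct_mulVec_pos (x := (Pi.single 0 1 : Fin 2 → ℝ)) (by simp [Function.ne_iff])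
    simpa [dotProduct, mulVec, Fin.sum_univ_two] using this
  have hd : 0 < F 1 1 := by
    have := hF.dotProduct_mulVec_pos (x := (Pi.single 1 1 : Fin 2 → ℝ)) (by simp [Function.ne_iff])
    simpa [dotProduct, mulVec, Fin.sum_univ_two] using this
  rw [Matrix.det_fin_two, hsym] at hdet
  set a := F 0 0; set b := F 0 1; set d := F 1 1
  have htr : 2 ≤ a + d := by nlinarith [sq_nonneg (a - d), sq_nonneg b]
  have htr0 : 0 < a + d := by linarith
  set x : ℝ := 2 / (a + d) with hx
  have hx1 : x ≤ 1 := by rw [hx, div_le_one htr0]; linarith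
  have hx0 : 0 < x := by positivity
  have hx2 : 0 ≤ 1 - x ^ 2 := by nlinarith
  set y : ℝ := Real.sqrt (1 - x ^ 2) with hy
  have hy2 : x ^ 2 + y ^ 2 = 1 := by
    rw [hy, Real.sq_sqrt hx2]; ring
  refine ⟨!![x, -y; y, x], ⟨?_, ?_⟩, ?_⟩
  · have hRT : (!![x, -y; y, x])ᵀ = !![x, y; -y, x] := by
      ext i j; fin_cases i <;> fin_cases j <;> rfl
    rw [hRT]
    ext i j; fin_cases i <;> fin_cases j <;>
      simp [Matrix.mul_apply, Fin.sum_univ_two, Matrix.one_apply] <;> nlinarith [hy2]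
  · rw [Matrix.det_fin_two]; simp; nlinarith [hy2]
  · have hd0 : (F - !![x, -y; y, x]).det = 0 := by
      rw [Matrix.det_fin_two]
      have hxs : x * (a + d) = 2 := by rw [hx]; field_simp
      simp only [Matrix.sub_apply]
      simp [hsym]
      nlinarith [hy2, hxs]
    obtain ⟨u, v, huv⟩ := det0_rank_one' (F - !![x, -y; y, x]) hd0
    refine ⟨u, v, ?_⟩
    rw [← huv]; abel
end
end

section
/- Let F be a symmetric positive-definite 2×2 real matrix with det F = 1. Then there exist rotations S, R ∈ SO(2) and ν₁ ∈ ℝ such that S R⁻¹ F S⁻¹ = Id + ν ⊗ e₂ with ν = (ν₁, 0); i.e. S R⁻¹ F S⁻¹ is the shear matrix with rows (1, ν₁) and (0, 1). In particular, for F' := Id + ν ⊗ e₂ one has SO(2)F' = SO(2) F S⁻¹, so dist(A S, SO(2)F) = dist(A, SO(2)F') for every 2×2 matrix A. -/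
open MeasureTheory Metric Set Matrix

noncomputable section

/- ## Auxiliary lemmas -/

lemma so2_mul_transpose {Q : Mat2} (hQ : Q ∈ SO2) : Q * Qᵀ = 1 :=
  mul_eq_one_comm.mpr hQ.1

lemma so2_transpose {Q : Mat2} (hQ : Q ∈ SO2) : Qᵀ ∈ SO2 :=
  ⟨by rw [Matrix.transpose_transpose]; exact so2_mul_transpose hQ,
   by rw [Matrix.det_transpose]; exact hQ.2⟩

lemma so2_mul {Q P : Mat2} (hQ : Q ∈ SO2) (hP : P ∈ SO2) : Q * P ∈ SO2 := by
  constructor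
  · rw [Matrix.transpose_mul, Matrix.mul_assoc, ← Matrix.mul_assoc Qᵀ, hQ.1, Matrix.one_mul, hP.1]
  · rw [Matrix.det_mul, hQ.2, hP.2, one_mul]

lemma frob_mul_so2 {S : Mat2} (hS : S ∈ SO2) (X : Mat2) : frobNorm (X * S) = frobNorm X := by
  unfold frobNorm
  congr 1
  rw [Matrix.transpose_mul,
    show Sᵀ * Xᵀ * (X * S) = Sᵀ * ((Xᵀ * X) * S) by simp only [Matrix.mul_assoc],
    Matrix.trace_mul_comm, Matrix.mul_assoc, so2_mul_transpose hS, Matrix.mul_one]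

lemma mdist_shift {S R : Mat2} (hS : S ∈ SO2) (hR : R ∈ SO2) (F A : Mat2) :
    mdist (A * S) (SO2mul F) = mdist A (SO2mul (Rᵀ * (S * F * Sᵀ))) := by
  unfold mdist
  congr 1
  ext t
  simp only [SO2mul, Set.image_image, Set.mem_image]
  constructor
  · rintro ⟨Q, hQ, rfl⟩
    refine ⟨Q * Sᵀ * R, so2_mul (so2_mul hQ (so2_transpose hS)) hR, ?_⟩
    have h1 : Q * Sᵀ * R * (Rᵀ * (S * F * Sᵀ)) = Q * (F * Sᵀ) := by
      simp only [Matrix.mul_assoc]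
      rw [← Matrix.mul_assoc R Rᵀ, so2_mul_transpose hR, Matrix.one_mul,
        ← Matrix.mul_assoc Sᵀ S, hS.1, Matrix.one_mul]
    rw [h1, ← frob_mul_so2 hS (A - Q * (F * Sᵀ))]
    congr 1
    rw [Matrix.sub_mul]
    simp only [Matrix.mul_assoc]
    rw [hS.1, Matrix.mul_one]
  · rintro ⟨Q, hQ, rfl⟩
    refine ⟨Q * Rᵀ * S, so2_mul (so2_mul hQ (so2_transpose hR)) hS, ?_⟩
    rw [← frob_mul_so2 hS (A - Q * (Rᵀ * (S * F * Sᵀ)))]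
    congr 1
    rw [Matrix.sub_mul]
    simp only [Matrix.mul_assoc]
    rw [hS.1, Matrix.mul_one]

lemma exists_angle' (x y : ℝ) (h : x^2 + y^2 = 1) : ∃ φ, Real.cos φ = x ∧ Real.sin φ = y := by
  have hx1 : -1 ≤ x := by nlinarith [sq_nonneg y]
  have hx2 : x ≤ 1 := by nlinarith [sq_nonneg y]
  rcases le_or_gt 0 y with hy | hy
  · exact ⟨Real.arccos x, Real.cos_arccos hx1 hx2, by
      rw [Real.sin_arccos, show 1 - x^2 = y^2 by linarith]; exact Real.sqrt_sq hy⟩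
  · refine ⟨-Real.arccos x, by rw [Real.cos_neg]; exact Real.cos_arccos hx1 hx2, ?_⟩
    rw [Real.sin_neg, Real.sin_arccos, show 1 - x^2 = y^2 by linarith,
      Real.sqrt_sq_eq_abs, abs_of_neg hy]; ring

lemma exists_unit_vec (a b c : ℝ) (hdet : a*c - b*b = 1) :
    ∃ x y : ℝ, x^2 + y^2 = 1 ∧ (a*x+b*y)^2 + (b*x+c*y)^2 = 1 := by
  have hkey : ∀ θ : ℝ, (a*Real.cos θ + b*Real.sin θ)^2 + (b*Real.cos θ + c*Real.sin θ)^2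
      = (a^2+2*b^2+c^2)/2 + (a^2-c^2)/2 * Real.cos (2*θ) + b*(a+c) * Real.sin (2*θ) := by
    intro θ
    rw [Real.cos_two_mul, Real.sin_two_mul]
    linear_combination (b^2+c^2) * (Real.sin_sq_add_cos_sq θ)
  set p : ℝ := (a^2+2*b^2+c^2)/2 with hp
  set q : ℝ := (a^2-c^2)/2 with hq
  set r : ℝ := b*(a+c) with hr
  have hs0 : (0:ℝ) ≤ Real.sqrt (q^2 + r^2) := Real.sqrt_nonneg _
  set s : ℝ := Real.sqrt (q^2 + r^2) with hs
  have hs2 : s^2 = q^2 + r^2 := Real.sq_sqrt (by positivity)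
  have hp1 : 1 ≤ p := by rw [hp]; nlinarith [sq_nonneg (a-c), sq_nonneg b]
  have hps : (p - s) * (p + s) = 1 := by
    rw [hp]
    linear_combination (-1) * hs2 + (a*c - b*b + 1) * hdet + (1/4 : ℝ) * hq * (a^2 - c^2 + 2*q)
      + hr * (b*(a+c) + r)
  rcases eq_or_lt_of_le hs0 with h0 | hspos
  · have hqr : q^2 + r^2 = 0 := by rw [← hs2, ← h0]; ring
    have hq0 : q = 0 := by nlinarith [sq_nonneg q, sq_nonneg r]
    have hr0 : r = 0 := by nlinarith [sq_nonneg q, sq_nonneg r]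
    have hpe : p = 1 := by nlinarith [hps]
    refine ⟨1, 0, by norm_num, ?_⟩
    have := hkey 0
    simp [hq0, hr0, hpe] at this
    linarith [this]
  · obtain ⟨φ, hcos, hsin⟩ := exists_angle' (q/s) (r/s) (by
      field_simp
      linarith [hs2])
    have hf1 : (a*Real.cos (φ/2) + b*Real.sin (φ/2))^2 + (b*Real.cos (φ/2) + c*Real.sin (φ/2))^2
        = p + s := by
      rw [hkey, show 2*(φ/2) = φ by ring, hcos, hsin]
      field_simp
      linarith [hs2]
    have hf2 : (a*Real.cos (φ/2 + Real.pi/2) + b*Real.sin (φ/2 + Real.pi/2))^2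
        + (b*Real.cos (φ/2 + Real.pi/2) + c*Real.sin (φ/2 + Real.pi/2))^2 = p - s := by
      rw [hkey, show 2*(φ/2 + Real.pi/2) = φ + Real.pi by ring, Real.cos_add_pi, Real.sin_add_pi,
        hcos, hsin]
      field_simp
      linarith [hs2]
    have hcont : Continuous (fun θ : ℝ =>
        (a*Real.cos θ + b*Real.sin θ)^2 + (b*Real.cos θ + c*Real.sin θ)^2) := by
      fun_prop
    have hmem : (1:ℝ) ∈ Set.uIcc ((fun θ : ℝ =>
        (a*Real.cos θ + b*Real.sin θ)^2 + (b*Real.cos θ + c*Real.sin θ)^2) (φ/2 + Real.pi/2))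
        ((fun θ : ℝ =>
        (a*Real.cos θ + b*Real.sin θ)^2 + (b*Real.cos θ + c*Real.sin θ)^2) (φ/2)) := by
      have hle : p - s ≤ 1 := by
        by_contra hcon
        push_neg at hcon
        have h1 : 1 ≤ p + s := by linarith
        have he : (p - s - 1) * (p + s) = 1 - (p + s) := by linear_combination hps
        have hx := mul_pos (show (0:ℝ) < p - s - 1 by linarith)
          (show (0:ℝ) < p + s by linarith)
        rw [he] at hx
        linarith
      simp only [hf1, hf2]
      rw [Set.uIcc_of_le (by linarith)]
      exact ⟨hle, by linarith⟩
    obtain ⟨θ, _, hθ⟩ := intermediate_value_uIcc (hcont.continuousOn) hmem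
    exact ⟨Real.cos θ, Real.sin θ, Real.cos_sq_add_sin_sq θ, hθ⟩

lemma tr2 (a b c d : ℝ) : (!![a, b; c, d] : Mat2)ᵀ = !![a, c; b, d] := by
  ext i j; fin_cases i <;> fin_cases j <;> simp

lemma mat2_ext {a b c d a' b' c' d' : ℝ} (h1 : a = a') (h2 : b = b') (h3 : c = c')
    (h4 : d = d') : (!![a, b; c, d] : Mat2) = !![a', b'; c', d'] := by
  rw [h1, h2, h3, h4]

/-- normal form `S R⁻¹ F S⁻¹ = Id + ν ⊗ e₂` (a shear), and the
resulting identity for distances to the wells. -/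
theorem shear_normal_form (F : Mat2) (hF : F.PosDef) (hdet : F.det = 1) :
    ∃ S ∈ SO2, ∃ R ∈ SO2, ∃ ν₁ : ℝ,
      S * R⁻¹ * F * S⁻¹ = 1 + Matrix.vecMulVec ![ν₁, 0] ![(0 : ℝ), 1] ∧
      (∀ A : Mat2,
        mdist (A * S) (SO2mul F) =
          mdist A (SO2mul (1 + Matrix.vecMulVec ![ν₁, 0] ![(0 : ℝ), 1]))) := by
  have hherm : Fᴴ = F := hF.1
  have hsym : F 1 0 = F 0 1 := by
    conv_lhs => rw [← hherm]
    simp [Matrix.conjTranspose_apply]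
  obtain ⟨a, b, c, hFe⟩ : ∃ a b c : ℝ, F = !![a, b; b, c] := by
    refine ⟨F 0 0, F 0 1, F 1 1, ?_⟩
    ext i j
    fin_cases i <;> fin_cases j <;> simp [hsym]
  rw [hFe, Matrix.det_fin_two_of] at hdet
  have hdet' : a*c - b*b = 1 := by linear_combination hdet
  obtain ⟨x, y, hxy, h1⟩ := exists_unit_vec a b c hdet'
  set S : Mat2 := !![x, y; -y, x] with hSdef
  set R0 : Mat2 := !![(x*(a*x+b*y) + y*(b*x+c*y)), -(x*(b*x+c*y) - y*(a*x+b*y)); (x*(b*x+c*y) - y*(a*x+b*y)), (x*(a*x+b*y) + y*(b*x+c*y))] with hR0def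
  have hS : S ∈ SO2 := by
    constructor
    · rw [hSdef, tr2, Matrix.mul_fin_two, Matrix.one_fin_two]
      exact mat2_ext (by linear_combination hxy) (by ring) (by ring) (by linear_combination hxy)
    · rw [hSdef, Matrix.det_fin_two_of]; linear_combination hxy
  have hG1 : ((x*(a*x+b*y) + y*(b*x+c*y)))^2 + ((x*(b*x+c*y) - y*(a*x+b*y)))^2 = 1 := by
    linear_combination ((a*x+b*y)^2 + (b*x+c*y)^2) * hxy + h1
  have hR0 : R0 ∈ SO2 := by
    constructor
    · rw [hR0def, tr2, Matrix.mul_fin_two, Matrix.one_fin_two]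
      exact mat2_ext (by linear_combination hG1) (by ring) (by ring) (by linear_combination hG1)
    · rw [hR0def, Matrix.det_fin_two_of]; linear_combination hG1
  have hSSt : S * Sᵀ = 1 := so2_mul_transpose hS
  have hSinv : S⁻¹ = Sᵀ := Matrix.inv_eq_right_inv hSSt
  have hR' : Sᵀ * R0 * S ∈ SO2 := so2_mul (so2_mul (so2_transpose hS) hR0) hS
  have hR'inv : (Sᵀ * R0 * S)⁻¹ = (Sᵀ * R0 * S)ᵀ :=
    Matrix.inv_eq_right_inv (so2_mul_transpose hR')
  have hN : R0ᵀ * (S * !![a, b; b, c] * Sᵀ) = !![1, ((x*(a*x+b*y) + y*(b*x+c*y))*(x*(b*x-a*y) + y*(c*x-b*y)) + (x*(b*x+c*y) - y*(a*x+b*y))*(x*(c*x-b*y) - y*(b*x-a*y))); 0, 1] := by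
    rw [hSdef, hR0def, tr2, tr2, Matrix.mul_fin_two, Matrix.mul_fin_two, Matrix.mul_fin_two]
    refine mat2_ext ?_ (by ring) (by ring) ?_
    · linear_combination ((a*x+b*y)^2 + (b*x+c*y)^2) * hxy + h1
    · linear_combination (a*c - b*b) * (x^2 + y^2 + 1) * hxy + hdet'
  have hshear : (1 : Mat2) + Matrix.vecMulVec ![((x*(a*x+b*y) + y*(b*x+c*y))*(x*(b*x-a*y) + y*(c*x-b*y)) + (x*(b*x+c*y) - y*(a*x+b*y))*(x*(c*x-b*y) - y*(b*x-a*y))), 0] ![(0 : ℝ), 1]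
      = !![1, ((x*(a*x+b*y) + y*(b*x+c*y))*(x*(b*x-a*y) + y*(c*x-b*y)) + (x*(b*x+c*y) - y*(a*x+b*y))*(x*(c*x-b*y) - y*(b*x-a*y))); 0, 1] := by
    ext i j
    fin_cases i <;> fin_cases j <;>
      simp [Matrix.vecMulVec_apply, Matrix.one_apply]
  refine ⟨S, hS, Sᵀ * R0 * S, hR', ((x*(a*x+b*y) + y*(b*x+c*y))*(x*(b*x-a*y) + y*(c*x-b*y)) + (x*(b*x+c*y) - y*(a*x+b*y))*(x*(c*x-b*y) - y*(b*x-a*y))), ?_, ?_⟩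
  · rw [hFe, hR'inv, hSinv, Matrix.transpose_mul, Matrix.transpose_mul,
      Matrix.transpose_transpose]
    have hcalc : S * (Sᵀ * (R0ᵀ * S)) = R0ᵀ * S := by
      rw [← Matrix.mul_assoc, hSSt, Matrix.one_mul]
    rw [hcalc, Matrix.mul_assoc R0ᵀ S, Matrix.mul_assoc R0ᵀ, hN]
    exact hshear.symm
  · intro A
    have hmat : R0ᵀ * (S * F * Sᵀ) = 1 + Matrix.vecMulVec ![((x*(a*x+b*y) + y*(b*x+c*y))*(x*(b*x-a*y) + y*(c*x-b*y)) + (x*(b*x+c*y) - y*(a*x+b*y))*(x*(c*x-b*y) - y*(b*x-a*y))), 0] ![(0 : ℝ), 1] := by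
      rw [hFe, hN]
      exact hshear.symm
    rw [← hmat]
    exact mdist_shift hS hR0 F A
end
end

section
/- Let R ∈ SO(2) and let U be a symmetric positive-definite 2×2 real matrix. Then dist(RU, SO(2)) = ‖U − Id‖, i.e. the Frobenius distance from RU to the set of 2×2 rotation matrices equals the Frobenius norm of U − Id. -/
open MeasureTheory Metric Set Matrix

noncomputable section

lemma so2_entries (Q : Mat2) (hQ : Q ∈ SO2) :
    Q 1 1 = Q 0 0 ∧ Q 0 1 = -(Q 1 0) ∧ (Q 0 0)^2 + (Q 1 0)^2 = 1 := by
  obtain ⟨h1, h2⟩ := hQ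
  have e00 := congrFun (congrFun h1 0) 0
  have e01 := congrFun (congrFun h1 0) 1
  have e11 := congrFun (congrFun h1 1) 1
  simp [Matrix.mul_apply, Fin.sum_univ_two, Matrix.one_apply, Matrix.transpose_apply] at e00 e01 e11
  rw [Matrix.det_fin_two] at h2
  refine ⟨?_, ?_, by nlinarith⟩
  · linear_combination Q 0 0 * h2 + Q 1 0 * e01 - Q 1 1 * e00
  · linear_combination Q 1 1 * e01 - Q 0 1 * h2 - Q 1 0 * e11

lemma diag_pos (U : Mat2) (hU : U.PosDef) : 0 < U 0 0 ∧ 0 < U 1 1 := by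
  have h0 := hU.dotProduct_mulVec_pos (x := ![1,0]) (by intro h; simpa using congrFun h 0)
  have h1 := hU.dotProduct_mulVec_pos (x := ![0,1]) (by intro h; simpa using congrFun h 1)
  simp [dotProduct, Matrix.mulVec, Fin.sum_univ_two] at h0 h1
  exact ⟨h0, h1⟩

lemma usym (U : Mat2) (hU : U.PosDef) : U 0 1 = U 1 0 := by
  have := hU.1
  have := congrFun (congrFun this 0) 1
  exact (by simpa [Matrix.conjTranspose_apply] using this : U 1 0 = U 0 1).symm

lemma frob_mul_rot (R A : Mat2) (h : Rᵀ * R = 1) : frobNorm (R * A) = frobNorm A := by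
  unfold frobNorm; congr 1
  rw [Matrix.transpose_mul, Matrix.mul_assoc, ← Matrix.mul_assoc Rᵀ, h, Matrix.one_mul]

lemma so2_mul_mem {R Q : Mat2} (hR : R ∈ SO2) (hQ : Q ∈ SO2) : R * Q ∈ SO2 := by
  refine ⟨?_, by rw [Matrix.det_mul, hR.2, hQ.2, one_mul]⟩
  rw [Matrix.transpose_mul, Matrix.mul_assoc, ← Matrix.mul_assoc Rᵀ, hR.1, Matrix.one_mul, hQ.1]

lemma so2_transpose_mem {R : Mat2} (hR : R ∈ SO2) : Rᵀ ∈ SO2 :=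
  ⟨by rw [Matrix.transpose_transpose]; exact mul_eq_one_comm.mp hR.1,
   by rw [Matrix.det_transpose]; exact hR.2⟩

lemma one_mem_so2 : (1 : Mat2) ∈ SO2 := ⟨by simp, by simp⟩

lemma key (U Q : Mat2) (hU : U.PosDef) (hQ : Q ∈ SO2) :
    frobNorm (U - 1) ≤ frobNorm (U - Q) := by
  obtain ⟨hd, hb, hcs⟩ := so2_entries Q hQ
  obtain ⟨h00, h11⟩ := diag_pos U hU
  have hs := usym U hU
  have hc : Q 0 0 ≤ 1 := by nlinarith [sq_nonneg (Q 1 0)]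
  unfold frobNorm
  apply Real.sqrt_le_sqrt
  simp only [Matrix.trace, Matrix.mul_apply, Fin.sum_univ_two, Matrix.sub_apply,
    Matrix.one_apply, Matrix.transpose_apply, Matrix.diag_apply]
  rw [hd, hb, hs]
  norm_num
  nlinarith [hcs, mul_nonneg (sub_nonneg.2 hc) (le_of_lt (add_pos h00 h11))]

/-- the Frobenius distance from `R * U` to `SO(2)` equals `‖U - Id‖`. -/
theorem dist_rot_mul_posdef (R U : Mat2) (hR : R ∈ SO2) (hU : U.PosDef) :
    mdist (R * U) SO2 = frobNorm (U - 1) := by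
  have hRRt : R * Rᵀ = 1 := mul_eq_one_comm.mp hR.1
  have himg : ((fun B => frobNorm (R * U - B)) '' SO2)
      = ((fun B => frobNorm (U - B)) '' SO2) := by
    ext y
    constructor
    · rintro ⟨Q, hQ, rfl⟩
      refine ⟨Rᵀ * Q, so2_mul_mem (so2_transpose_mem hR) hQ, ?_⟩
      have : R * U - Q = R * (U - Rᵀ * Q) := by
        rw [Matrix.mul_sub, ← Matrix.mul_assoc, hRRt, Matrix.one_mul]
      show frobNorm (U - Rᵀ * Q) = frobNorm (R * U - Q)
      rw [this, frob_mul_rot R (U - Rᵀ * Q) hR.1]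
    · rintro ⟨Q, hQ, rfl⟩
      refine ⟨R * Q, so2_mul_mem hR hQ, ?_⟩
      have : R * U - R * Q = R * (U - Q) := (Matrix.mul_sub R U Q).symm
      show frobNorm (R * U - R * Q) = frobNorm (U - Q)
      rw [this, frob_mul_rot R (U - Q) hR.1]
  unfold mdist
  rw [himg]
  apply le_antisymm
  · exact csInf_le ⟨0, fun y ⟨Q, _, hy⟩ => hy ▸ Real.sqrt_nonneg _⟩
      ⟨1, one_mem_so2, rfl⟩
  · exact le_csInf ⟨_, 1, one_mem_so2, rfl⟩ (fun y ⟨Q, hQ, hy⟩ => hy ▸ key U Q hU hQ)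
end
end
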